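/- Let k be a finite field, R a finite-dimensional semisimple k-algebra, V a simple finite-dimensional left R-module, and n₁ ≤ n₂ ≤ n₃. With U and C(n₂,n₃) as above, the cardinality of { C ∈ C(n₂,n₃) : u ∈ C } is independent of the choice of u ∈ U. -/

import Mathlib

/-!
Over any ring, `V^n` is semisimple of finite length and all its simple submodules are
isomorphic to `V`, so its submodules are determined up to isomorphism by their length.
Hence two submodules `R·u ≅ R·u'` have complements of equal length, which are isomorphic, and
gluing the two isomorphisms gives an automorphism `σ` of `V^{n₃}` with `σ(R·u) = R·u'`.
Pushing forward along `σ` matches the submodules isomorphic to `V^{n₂}` containing `u` with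
those containing `u'`.
-/

open Module Submodule

section

variable {R N S : Type*} [Ring R] [AddCommGroup N] [Module R N] [AddCommGroup S] [Module R S]

variable (R S) in
theorem isIsotypicOfType_pi [IsSimpleModule R S] (ι : Type*) : IsIsotypicOfType R (ι → S) S :=
  fun T _ ↦ by
    have := IsSimpleModule.nontrivial R T
    obtain ⟨i, hi⟩ : ∃ i, LinearMap.proj i ∘ₗ T.subtype ≠ 0 := by
      by_contra! h
      obtain ⟨t, ht⟩ := exists_ne (0 : T)
      exact ht (Subtype.ext (funext fun i ↦ LinearMap.congr_fun (h i) t))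
    exact ⟨.ofBijective _ (LinearMap.bijective_of_ne_zero hi)⟩

theorem IsIsotypicOfType.nonempty_linearEquiv_fun_iff [IsSemisimpleModule R N] [Module.Finite R N]
    [IsSimpleModule R S] (h : IsIsotypicOfType R N S) {m : ℕ} :
    Nonempty (N ≃ₗ[R] Fin m → S) ↔ length R N = m := by
  refine ⟨fun ⟨e⟩ ↦ by simp [e.length_eq], fun hm ↦ ?_⟩
  obtain ⟨n, ⟨e⟩⟩ := h.linearEquiv_fun
  obtain rfl : n = m := by simpa [e.length_eq] using hm
  exact ⟨e⟩

theorem IsIsotypicOfType.nonempty_linearEquiv_of_length_eq {N' : Type*} [AddCommGroup N']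
    [Module R N'] [IsSemisimpleModule R N] [Module.Finite R N] [IsSemisimpleModule R N']
    [Module.Finite R N'] [IsSimpleModule R S] (h : IsIsotypicOfType R N S)
    (h' : IsIsotypicOfType R N' S) (hl : length R N = length R N') : Nonempty (N ≃ₗ[R] N') := by
  obtain ⟨n, ⟨e⟩⟩ := h.linearEquiv_fun
  obtain ⟨e'⟩ := h'.nonempty_linearEquiv_fun_iff.mpr (hl ▸ h.nonempty_linearEquiv_fun_iff.mp ⟨e⟩)
  exact ⟨e.trans e'.symm⟩

theorem Submodule.exists_linearEquiv_map_eq_of_isCompl {p q p' q' : Submodule R N}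
    (hpq : IsCompl p q) (hpq' : IsCompl p' q') (e : p ≃ₗ[R] p') (f : q ≃ₗ[R] q') :
    ∃ σ : N ≃ₗ[R] N, p.map (σ : N →ₗ[R] N) = p' := by
  let σ := (prodEquivOfIsCompl p q hpq).symm ≪≫ₗ e.prodCongr f ≪≫ₗ prodEquivOfIsCompl p' q' hpq'
  have hσ : (σ : N →ₗ[R] N) ∘ₗ p.subtype = p'.subtype ∘ₗ e := by
    ext x
    simp [σ]
  refine ⟨σ, ?_⟩
  rw [← range_subtype p, ← LinearMap.range_comp, hσ, LinearMap.range_comp, e.range, map_top,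
    range_subtype]

theorem IsIsotypicOfType.exists_linearEquiv_map_eq [IsSemisimpleModule R N] [Module.Finite R N]
    [IsSimpleModule R S] (h : IsIsotypicOfType R N S) {p p' : Submodule R N} (e : p ≃ₗ[R] p') :
    ∃ σ : N ≃ₗ[R] N, p.map (σ : N →ₗ[R] N) = p' := by
  obtain ⟨q, hq⟩ := exists_isCompl p
  obtain ⟨q', hq'⟩ := exists_isCompl p'
  have hlen : length R p + length R q = length R p' + length R q' := by
    rw [← length_prod, ← length_prod, (prodEquivOfIsCompl p q hq).length_eq,
      (prodEquivOfIsCompl p' q' hq').length_eq]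
  have hfin : length R p ≠ ⊤ := length_ne_top
  rw [e.length_eq] at hlen hfin
  obtain ⟨f⟩ := (h.of_injective _ q.subtype_injective).nonempty_linearEquiv_of_length_eq
    (h.of_injective _ q'.subtype_injective) (WithTop.add_left_cancel hfin hlen)
  exact exists_linearEquiv_map_eq_of_isCompl hq hq' e f

theorem Submodule.natCard_linearEquiv_mem_eq_of_map_span_eq (T : Type*) [AddCommGroup T]
    [Module R T] (σ : N ≃ₗ[R] N) {u u' : N} (hσ : (span R {u}).map (σ : N →ₗ[R] N) = span R {u'}) :
    Nat.card {C : Submodule R N // Nonempty (C ≃ₗ[R] T) ∧ u ∈ C} =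
    Nat.card {C : Submodule R N // Nonempty (C ≃ₗ[R] T) ∧ u' ∈ C} := by
  refine Nat.card_congr (Equiv.subtypeEquiv (orderIsoMapComap σ).toEquiv fun C ↦ ?_)
  have hmem : u ∈ C ↔ u' ∈ C.map (σ : N →ₗ[R] N) := by
    rw [← span_singleton_le_iff_mem, ← span_singleton_le_iff_mem, ← hσ]
    exact (orderIsoMapComap σ).le_iff_le.symm
  exact and_congr ⟨fun ⟨e⟩ ↦ ⟨(σ.submoduleMap C).symm.trans e⟩,
    fun ⟨e⟩ ↦ ⟨(σ.submoduleMap C).trans e⟩⟩ hmem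

end

theorem stmt3_general (R : Type*) [Ring R]
    (V : Type*) [AddCommGroup V] [Module R V]
    [IsSimpleModule R V]
    (n₁ n₂ n₃ : ℕ)
    (u u' : Fin n₃ → V)
    (hu : Nonempty ((Submodule.span R {u}) ≃ₗ[R] (Fin n₁ → V)))
    (hu' : Nonempty ((Submodule.span R {u'}) ≃ₗ[R] (Fin n₁ → V))) :
    Nat.card {C : Submodule R (Fin n₃ → V) // Nonempty (C ≃ₗ[R] (Fin n₂ → V)) ∧ u ∈ C} =
    Nat.card {C : Submodule R (Fin n₃ → V) // Nonempty (C ≃ₗ[R] (Fin n₂ → V)) ∧ u' ∈ C} := by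
  obtain ⟨σ, hσ⟩ := (isIsotypicOfType_pi R V (Fin n₃)).exists_linearEquiv_map_eq
    (hu.some.trans hu'.some.symm)
  exact natCard_linearEquiv_mem_eq_of_map_span_eq _ σ hσ

/-- **U-balancedness.** Let `k` be a finite field, `R` a finite-dimensional semisimple
`k`-algebra, `V` a simple finite-dimensional left `R`-module, and `n₁ ≤ n₂ ≤ n₃`. With
`U = {v ∈ V^{n₃} : R·v ≅ V^{n₁}}` and `C(n₂,n₃)` the set of `R`-submodules of `V^{n₃}`
isomorphic to `V^{n₂}`, the cardinality of `{C ∈ C(n₂,n₃) : u ∈ C}` is independent of the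
choice of `u ∈ U`. -/
theorem stmt3 (k : Type*) [Field k] [Finite k] (R : Type*) [Ring R] [Algebra k R]
    [FiniteDimensional k R] [IsSemisimpleRing R]
    (V : Type*) [AddCommGroup V] [Module R V] [Module k V] [IsScalarTower k R V]
    [IsSimpleModule R V] [FiniteDimensional k V]
    (n₁ n₂ n₃ : ℕ) (h12 : n₁ ≤ n₂) (h23 : n₂ ≤ n₃)
    (u u' : Fin n₃ → V)
    (hu : Nonempty ((Submodule.span R {u}) ≃ₗ[R] (Fin n₁ → V)))
    (hu' : Nonempty ((Submodule.span R {u'}) ≃ₗ[R] (Fin n₁ → V))) :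
    Nat.card {C : Submodule R (Fin n₃ → V) // Nonempty (C ≃ₗ[R] (Fin n₂ → V)) ∧ u ∈ C} =
    Nat.card {C : Submodule R (Fin n₃ → V) // Nonempty (C ≃ₗ[R] (Fin n₂ → V)) ∧ u' ∈ C} :=
  stmt3_general R V n₁ n₂ n₃ u u' hu hu'
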